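/- Let (Ω,μ) be a finite measure space and f ∈ L¹(Ω) with f ≥ 0. Then lim_{ε→0⁺} (∫_Ω log(max(f(t),ε)) dμ(t)) / |log ε| = μ(supp(f)) − μ(Ω), where supp(f) = f⁻¹((0,∞)). -/

import Mathlib

open MeasureTheory Filter

theorem log_max_integral_asymptotics {Ω : Type*} [MeasurableSpace Ω]
    (μ : Measure Ω) [IsFiniteMeasure μ] (f : Ω → ℝ)
    (hmeas : Measurable f) (hint : Integrable f μ) (hpos : ∀ t, 0 ≤ f t) :
    Tendsto (fun ε : ℝ => (∫ t, Real.log (max (f t) ε) ∂μ) / |Real.log ε|)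
      (nhdsWithin 0 (Set.Ioi 0))
      (nhds ((μ {t | 0 < f t}).toReal - (μ Set.univ).toReal)) := by
  set s : Set Ω := {t | 0 < f t} with hs
  have hsm : MeasurableSet s := measurableSet_lt measurable_const hmeas
  have hcompl : sᶜ = {t | f t = 0} := by
    ext t
    simp only [Set.mem_compl_iff, Set.mem_setOf_eq, hs, not_lt]
    exact ⟨fun h => le_antisymm h (hpos t), fun h => h.le⟩
  -- limit function
  set φ : Ω → ℝ := Set.indicator sᶜ (fun _ => (-1 : ℝ)) with hφ
  have habs : Tendsto (fun ε : ℝ => |Real.log ε|) (nhdsWithin 0 (Set.Ioi 0)) atTop :=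
    tendsto_abs_atBot_atTop.comp Real.tendsto_log_nhdsGT_zero
  have key : Tendsto (fun ε : ℝ => ∫ t, Real.log (max (f t) ε) / |Real.log ε| ∂μ)
      (nhdsWithin 0 (Set.Ioi 0)) (nhds (∫ t, φ t ∂μ)) := by
    apply tendsto_integral_filter_of_dominated_convergence (fun t => max 1 (f t))
    · exact Eventually.of_forall fun ε =>
        ((Real.measurable_log.comp (hmeas.max measurable_const)).div_const _).aestronglyMeasurable
    · have hmem : Set.Ioo (0:ℝ) (Real.exp (-1)) ∈ nhdsWithin 0 (Set.Ioi 0) :=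
        Ioo_mem_nhdsGT_of_mem ⟨le_refl _, Real.exp_pos _⟩
      filter_upwards [hmem] with ε hε
      refine Eventually.of_forall fun t => ?_
      have hε0 : 0 < ε := hε.1
      have hlogε : Real.log ε < -1 := by
        have := Real.log_lt_log hε0 hε.2
        rwa [Real.log_exp] at this
      have habs1 : 1 ≤ |Real.log ε| := by
        rw [abs_of_neg (by linarith)]; linarith
      have habspos : 0 < |Real.log ε| := by linarith
      rw [Real.norm_eq_abs, abs_div, abs_abs, div_le_iff₀ habspos]
      have hft := hpos t
      have hup : Real.log (max (f t) ε) ≤ f t := by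
        have h1 : Real.log (max (f t) ε) ≤ max (f t) ε - 1 :=
          Real.log_le_sub_one_of_pos (lt_max_of_lt_right hε0)
        have : max (f t) ε ≤ f t + 1 := by
          apply max_le (by linarith)
          have : ε < 1 := lt_of_lt_of_le hε.2 (Real.exp_le_one_iff.mpr (by norm_num))
          linarith
        linarith
      have hlow : -|Real.log ε| ≤ Real.log (max (f t) ε) := by
        rw [abs_of_neg (show Real.log ε < 0 by linarith), neg_neg]
        exact Real.log_le_log hε0 (le_max_right _ _)
      rw [abs_le]
      constructor
      · have : -(max 1 (f t) * |Real.log ε|) ≤ -|Real.log ε| := by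
          rw [neg_le_neg_iff]
          nlinarith [le_max_left 1 (f t)]
        linarith
      · have : f t ≤ max 1 (f t) * |Real.log ε| := by
          nlinarith [le_max_right 1 (f t)]
        linarith
    · exact (integrable_const 1).sup hint
    · refine Eventually.of_forall fun t => ?_
      rcases eq_or_lt_of_le (hpos t) with h0 | h0
      · have hφt : φ t = -1 := by
          rw [hφ, Set.indicator_of_mem (by rw [hcompl]; exact h0.symm)]
        rw [hφt]
        have hmem : Set.Ioo (0:ℝ) 1 ∈ nhdsWithin 0 (Set.Ioi 0) :=
          Ioo_mem_nhdsGT_of_mem ⟨le_refl _, one_pos⟩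
        apply Tendsto.congr' _ tendsto_const_nhds
        filter_upwards [hmem] with ε hε
        have hlog : Real.log ε < 0 := Real.log_neg hε.1 hε.2
        rw [← h0, max_eq_right hε.1.le, abs_of_neg hlog, div_neg, div_self hlog.ne]
      · have hφt : φ t = 0 := by
          rw [hφ, Set.indicator_of_notMem]
          rw [hcompl]; exact fun h => h0.ne' h
        rw [hφt]
        have hmem : Set.Ioo (0:ℝ) (f t) ∈ nhdsWithin 0 (Set.Ioi 0) :=
          Ioo_mem_nhdsGT_of_mem ⟨le_refl _, h0⟩
        have h1 : Tendsto (fun ε : ℝ => Real.log (f t) / |Real.log ε|)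
            (nhdsWithin 0 (Set.Ioi 0)) (nhds 0) :=
          Tendsto.div_atTop tendsto_const_nhds habs
        apply Tendsto.congr' _ h1
        filter_upwards [hmem] with ε hε
        rw [max_eq_left hε.2.le]
  have hint_eq : ∫ t, φ t ∂μ = (μ s).toReal - (μ Set.univ).toReal := by
    rw [hφ, integral_indicator_const _ hsm.compl]
    have hadd : μ s + μ sᶜ = μ Set.univ := measure_add_measure_compl hsm
    have h1 : (μ s).toReal + (μ sᶜ).toReal = (μ Set.univ).toReal := by
      rw [← ENNReal.toReal_add (measure_ne_top μ s) (measure_ne_top μ sᶜ), hadd]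
    simp only [smul_eq_mul, mul_neg_one]
    have hreal : μ.real sᶜ = (μ sᶜ).toReal := rfl
    linarith
  rw [← hint_eq]
  apply key.congr
  intro ε
  rw [integral_div]
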